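/- There exists a constant K, independent of W, Λ, E ∈ 𝓘 and f, such that for every f with 0 < f < 1, the determinant ratio satisfies det(C⁻¹)/det(C_f⁻¹) ≤ K (1 − f)⁻¹ e^{K f |Λ|/W²}, where C_f⁻¹ = C⁻¹ − f m_r²·Id (a positive matrix for 0 < f < 1). -/

import Mathlib

open scoped BigOperators Topology
open Matrix MeasureTheory Filter

noncomputable section

/-- The discrete torus of side lengths `L i`; when each `L i` is a positive multiple of `W`,
this is a union of cubes of side `W` (containing `0`) with periodic boundary conditions. -/
abbrev Torus (L : Fin 3 → ℕ) := (i : Fin 3) → ZMod (L i)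

/-- Unit lattice vector in direction `i`. -/
def unitVec (L : Fin 3 → ℕ) (i : Fin 3) : Torus L := fun j => if j = i then 1 else 0

/-- Discrete Laplacian with periodic boundary conditions. -/
def lap (L : Fin 3 → ℕ) : Matrix (Torus L) (Torus L) ℝ :=
  Matrix.of fun x y =>
    (∑ i : Fin 3, ((if y = x + unitVec L i then (1 : ℝ) else 0) +
        (if y = x - unitVec L i then (1 : ℝ) else 0))) - (if y = x then 6 else 0)

/-- Distance to `0` in `ℤ/n`, via the minimal representative. -/
def zdist {n : ℕ} (x : ZMod n) : ℕ := min x.val (n - x.val)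

/-- Euclidean distance on the torus. -/
def tdist (L : Fin 3 → ℕ) (x y : Torus L) : ℝ :=
  Real.sqrt (∑ i : Fin 3, ((zdist (x i - y i) : ℝ)) ^ 2)

/-- The band covariance profile `J = (-W²Δ + 1)⁻¹`. -/
def Jmat (L : Fin 3 → ℕ) [∀ i, NeZero (L i)] (W : ℕ) : Matrix (Torus L) (Torus L) ℝ :=
  (((W : ℝ) ^ 2) • (-lap L) + 1)⁻¹

def mr2 (E : ℝ) : ℝ := 2 * (1 - E ^ 2 / 4)
def mi2 (E : ℝ) : ℝ := E * Real.sqrt (1 - E ^ 2 / 4)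
def mr (E : ℝ) : ℝ := Real.sqrt (mr2 E)

/-- `ℰ = E/2 - i√(1 - E²/4)`. -/
def calE (E : ℝ) : ℂ := ((E / 2 : ℝ) : ℂ) - (Real.sqrt (1 - E ^ 2 / 4) : ℝ) * Complex.I
/-- `ℰ̄ = E - ℰ = E/2 + i√(1 - E²/4)`, the complex conjugate of `ℰ`. -/
def calEbar (E : ℝ) : ℂ := ((E / 2 : ℝ) : ℂ) + (Real.sqrt (1 - E ^ 2 / 4) : ℝ) * Complex.I

/-- `C = (-W²Δ + m_r²)⁻¹`. -/
def Cmat (L : Fin 3 → ℕ) [∀ i, NeZero (L i)] (W : ℕ) (E : ℝ) : Matrix (Torus L) (Torus L) ℝ :=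
  (((W : ℝ) ^ 2) • (-lap L) + mr2 E • 1)⁻¹

/-- `B = (C⁻¹ + i m_i²·Id)⁻¹`. -/
def Bmat (L : Fin 3 → ℕ) [∀ i, NeZero (L i)] (W : ℕ) (E : ℝ) : Matrix (Torus L) (Torus L) ℂ :=
  (((Cmat L W E)⁻¹).map Complex.ofReal + (mi2 E * Complex.I) • 1)⁻¹

/-- The energy window `𝓘 = {E : η ≤ |E| ≤ 1.8}`. -/
def specI (η : ℝ) : Set ℝ := {E : ℝ | η ≤ |E| ∧ |E| ≤ 1.8}

/-- Wigner semicircle density `(1/π)√(1 - E²/4)`. -/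
def rhoSC (E : ℝ) : ℝ := Real.sqrt (1 - E ^ 2 / 4) / Real.pi

/-- Real quadratic form `aᵀ M a`. -/
def qf (L : Fin 3 → ℕ) [∀ i, NeZero (L i)] (M : Matrix (Torus L) (Torus L) ℝ)
    (a : Torus L → ℝ) : ℝ := a ⬝ᵥ M.mulVec a

/-!
The characters of the torus diagonalize `-Δ`, with eigenvalues
`λ_k = ∑_j (2 - 2 cos (2π k_j / L_j))`, so with `m = m_r²` the ratio is
`∏_k (W²λ_k + m) / (W²λ_k + (1 - f) m)`. The zero mode gives `(1 - f)⁻¹`; for `k ≠ 0` concavity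
of `log` bounds the factor by `(1 + m / (W²λ_k)) ^ f`, so it remains to show
`∑_{k ≠ 0} log (1 + m / (W²λ_k)) = O(|Λ| / W²)`.
Sort the modes by the direction `j` and value `d / L_j` of their largest relative coordinate
`|k_i| / L_i`. Then `λ_k ≥ 16 (d / L_j)²`, and there are at most `8 (1 + s)² |Λ| / (W² L_j)` such
modes, `s = W d / L_j`. Since `(1 + s)² log (1 + s⁻²) ≤ 4 + 16 / √s` and
`∑_{d ≤ L} d^{-1/2} ≤ 2 √L`, each direction contributes `O(|Λ| / W²)`. The logarithm is
essential: for an elongated box `∑_{k ≠ 0} 1 / (W²λ_k)` is not `O(|Λ| / W²)`.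
-/
open Real Finset

namespace Matrix

variable {K n ι : Type*} [Field K] [Fintype n] [DecidableEq n] [Fintype ι] [DecidableEq ι]

theorem det_eq_prod_of_mulVec_basis_eq_smul (M : Matrix n n K) (b : Module.Basis ι K (n → K))
    (μ : ι → K) (h : ∀ i, M *ᵥ b i = μ i • b i) : M.det = ∏ i, μ i := by
  have : LinearMap.toMatrix b b (toLin' M) = diagonal μ := by
    ext i j
    rw [LinearMap.toMatrix_apply, toLin'_apply, h, map_smul, b.repr_self, diagonal_apply]
    by_cases hij : i = j <;> simp [hij]
  rw [← LinearMap.det_toLin', ← LinearMap.det_toMatrix b, this, det_diagonal]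

end Matrix

theorem sum_Icc_inv_sqrt_le (n : ℕ) : ∑ d ∈ Icc 1 n, (√d)⁻¹ ≤ 2 * √n := by
  induction n with
  | zero => simp
  | succ n ih =>
    rw [sum_Icc_succ_top (by omega), Nat.cast_succ]
    have hn : √n ^ 2 = n := sq_sqrt n.cast_nonneg
    have hn1 : √(n + 1) ^ 2 = n + 1 := sq_sqrt (by positivity)
    have hpos : 0 < √(n + 1) := sqrt_pos.2 (by positivity)
    have hstep : (√(n + 1))⁻¹ ≤ 2 * √(n + 1) - 2 * √n := by
      rw [inv_le_iff_one_le_mul₀' hpos]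
      nlinarith [sq_nonneg (√(n + 1) - √n)]
    linarith

theorem log_one_add_pow_four_le {u : ℝ} (hu : 0 ≤ u) : log (1 + u ^ 4) ≤ 4 * u := by
  calc log (1 + u ^ 4) ≤ log ((1 + u) ^ 4) := by
        gcongr
        nlinarith [pow_nonneg hu 2, pow_nonneg hu 3]
    _ = 4 * log (1 + u) := by rw [log_pow]; norm_num
    _ ≤ 4 * u := by gcongr; linarith [log_le_sub_one_of_pos (by linarith : 0 < 1 + u)]

theorem one_add_sq_mul_log_one_add_inv_sq_le {s : ℝ} (hs : 0 < s) :
    (1 + s) ^ 2 * log (1 + 1 / s ^ 2) ≤ 4 + 16 / √s := by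
  have hlog : 0 ≤ log (1 + 1 / s ^ 2) := log_nonneg (le_add_of_nonneg_right (by positivity))
  have hsqrt : 0 ≤ 16 / √s := by positivity
  rcases le_or_gt 1 s with h1 | h1
  · have : log (1 + 1 / s ^ 2) ≤ 1 / s ^ 2 := by
      linarith [log_le_sub_one_of_pos (by positivity : 0 < 1 + 1 / s ^ 2)]
    calc (1 + s) ^ 2 * log (1 + 1 / s ^ 2) ≤ (1 + s) ^ 2 * (1 / s ^ 2) := by gcongr
      _ = (1 / s + 1) ^ 2 := by field_simp
      _ ≤ 4 := by
          have : 1 / s ≤ 1 := by rw [div_le_one hs]; exact h1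
          nlinarith [one_div_pos.2 hs]
      _ ≤ 4 + 16 / √s := by linarith
  · have hu : 1 / s ^ 2 = (1 / √s) ^ 4 := by
      rw [div_pow, one_pow, show (4 : ℕ) = 2 * 2 by rfl, pow_mul, sq_sqrt hs.le]
    calc (1 + s) ^ 2 * log (1 + 1 / s ^ 2) ≤ 4 * (4 * (1 / √s)) := by
          rw [hu] at hlog ⊢
          exact mul_le_mul (by nlinarith) (log_one_add_pow_four_le (by positivity)) hlog
            (by norm_num)
      _ ≤ 4 + 16 / √s := by rw [← mul_assoc, mul_one_div]; linarith

theorem add_le_exp_mul_log_mul {y m f : ℝ} (hy : 0 < y) (hm : 0 ≤ m) (hf0 : 0 ≤ f) (hf1 : f ≤ 1) :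
    y + m ≤ exp (f * log (1 + m / y)) * (y + (1 - f) * m) := by
  have hconc := strictConcaveOn_log_Ioi.concaveOn.2 (Set.mem_Ioi.2 (by linarith : 0 < y + m))
    (Set.mem_Ioi.2 hy) (by linarith : 0 ≤ 1 - f) hf0 (by ring)
  simp only [smul_eq_mul] at hconc
  have hsplit : log (1 + m / y) = log (y + m) - log y := by
    rw [← log_div (by linarith) hy.ne', add_div, div_self hy.ne']
  rw [← exp_log (by linarith : 0 < y + m), ← exp_log (by nlinarith : 0 < y + (1 - f) * m),
    ← exp_add]
  gcongr
  rw [hsplit, show (1 - f) * (y + m) + f * y = y + (1 - f) * m by ring] at *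
  linarith

theorem prod_add_le_exp_mul_prod {ι : Type*} (s : Finset ι) {y : ι → ℝ} (hy : ∀ k ∈ s, 0 < y k)
    {m f : ℝ} (hm : 0 ≤ m) (hf0 : 0 ≤ f) (hf1 : f ≤ 1) :
    ∏ k ∈ s, (y k + m) ≤ exp (f * ∑ k ∈ s, log (1 + m / y k)) * ∏ k ∈ s, (y k + (1 - f) * m) := by
  rw [mul_sum, exp_sum, ← prod_mul_distrib]
  exact prod_le_prod (fun k hk => by linarith [hy k hk]) fun k hk =>
    add_le_exp_mul_log_mul (hy k hk) hm hf0 hf1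

theorem zdist_eq_natAbs_valMinAbs {n : ℕ} [NeZero n] (a : ZMod n) :
    zdist a = a.valMinAbs.natAbs :=
  (ZMod.valMinAbs_natAbs_eq_min a).symm

theorem zdist_eq_zero_iff {n : ℕ} [NeZero n] {a : ZMod n} : zdist a = 0 ↔ a = 0 := by
  rw [zdist_eq_natAbs_valMinAbs, Int.natAbs_eq_zero, ZMod.valMinAbs_eq_zero]

theorem two_mul_zdist_le {n : ℕ} [NeZero n] (a : ZMod n) : 2 * zdist a ≤ n := by
  have := ZMod.natAbs_valMinAbs_le a
  rw [zdist_eq_natAbs_valMinAbs]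
  omega

theorem card_filter_zdist_eq_le_two (n : ℕ) [NeZero n] (d : ℕ) :
    #{a : ZMod n | zdist a = d} ≤ 2 := by
  refine (card_le_card (t := {(d : ZMod n), -(d : ZMod n)}) fun a ha => ?_).trans card_le_two
  rw [mem_filter, zdist_eq_natAbs_valMinAbs] at ha
  rw [← ZMod.coe_valMinAbs a]
  rcases Int.natAbs_eq a.valMinAbs with h | h <;> rw [h, ha.2] <;> simp

theorem card_filter_zdist_le (n : ℕ) [NeZero n] {c : ℝ} (hc : 0 ≤ c) :
    (#{a : ZMod n | (zdist a : ℝ) ≤ c} : ℝ) ≤ 2 * c + 1 := by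
  have hsub : ({a | (zdist a : ℝ) ≤ c} : Finset (ZMod n)) ⊆
      (Icc (-⌊c⌋₊ : ℤ) ⌊c⌋₊).image ((↑) : ℤ → ZMod n) := by
    intro a ha
    rw [mem_filter, zdist_eq_natAbs_valMinAbs, ← Nat.le_floor_iff hc] at ha
    refine mem_image.2 ⟨a.valMinAbs, mem_Icc.2 ?_, ZMod.coe_valMinAbs a⟩
    omega
  have hcard := (card_le_card hsub).trans card_image_le
  rw [Int.card_Icc] at hcard
  have : (#{a : ZMod n | (zdist a : ℝ) ≤ c} : ℝ) ≤ 2 * ⌊c⌋₊ + 1 := by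
    exact_mod_cast (show _ ≤ 2 * ⌊c⌋₊ + 1 by omega)
  linarith [Nat.floor_le hc]

theorem stdAddChar_add_stdAddChar_neg {n : ℕ} [NeZero n] (a : ZMod n) :
    ZMod.stdAddChar a + ZMod.stdAddChar (-a) = (2 * Real.cos (2 * π * zdist a / n) : ℝ) := by
  rw [← ZMod.coe_valMinAbs a, ← Int.cast_neg, ZMod.stdAddChar_coe, ZMod.stdAddChar_coe,
    ZMod.coe_valMinAbs, zdist_eq_natAbs_valMinAbs, Nat.cast_natAbs, Int.cast_abs]
  have : 2 * π * |(a.valMinAbs : ℝ)| / n = |2 * π * a.valMinAbs / n| := by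
    rw [abs_div, abs_mul, abs_of_pos (by positivity : 0 < 2 * π), Nat.abs_cast]
  rw [this, Real.cos_abs]
  push_cast [Complex.two_cos]
  congr 1 <;> congr 1 <;> ring

theorem sq_zdist_div_le_two_sub_two_cos {n : ℕ} [NeZero n] (a : ZMod n) :
    16 * ((zdist a : ℝ) / n) ^ 2 ≤ 2 - 2 * Real.cos (2 * π * zdist a / n) := by
  have hn : (0 : ℝ) < n := by exact_mod_cast Nat.pos_of_neZero n
  have hd : 2 * (zdist a : ℝ) ≤ n := by exact_mod_cast two_mul_zdist_le a
  have hx : |2 * π * zdist a / n| ≤ π := by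
    rw [abs_of_nonneg (by positivity), div_le_iff₀ hn]
    nlinarith [pi_pos]
  have := cos_le_one_sub_mul_cos_sq hx
  have hπ : π ≠ 0 := pi_ne_zero
  calc 16 * ((zdist a : ℝ) / n) ^ 2 = 2 * (2 / π ^ 2 * (2 * π * zdist a / n) ^ 2) := by
        field_simp; ring
    _ ≤ _ := by linarith

theorem mr2_pos {E : ℝ} (hE : |E| ≤ 1.8) : 0 < mr2 E := by
  have : E ^ 2 ≤ 1.8 ^ 2 := sq_le_sq' (abs_le.1 hE).1 (abs_le.1 hE).2
  unfold mr2
  nlinarith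

theorem mr2_le_two (E : ℝ) : mr2 E ≤ 2 := by
  unfold mr2
  nlinarith [sq_nonneg E]

section Torus

variable {L : Fin 3 → ℕ}

-- The cosine is written with `zdist (k j)` instead of `(k j).val` (same value), so that
-- `2 * zdist ≤ L` directly gives the quadratic lower bound.
def lapEigenvalue (L : Fin 3 → ℕ) (k : Torus L) : ℝ :=
  ∑ j, (2 - 2 * Real.cos (2 * π * zdist (k j) / L j))

theorem lapEigenvalue_zero : lapEigenvalue L 0 = 0 := by
  simp [lapEigenvalue, zdist]

variable [∀ i, NeZero (L i)]

def torusChar (k : Torus L) : AddChar (Torus L) ℂ where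
  toFun x := ∏ j, ZMod.stdAddChar (k j * x j)
  map_zero_eq_one' := by simp
  map_add_eq_mul' x y := by simp [mul_add, AddChar.map_add_eq_mul, prod_mul_distrib]

theorem torusChar_unitVec (k : Torus L) (i : Fin 3) :
    torusChar k (unitVec L i) = ZMod.stdAddChar (k i) := by
  simp [torusChar, unitVec, apply_ite]

theorem injective_torusChar : Function.Injective (torusChar (L := L)) := by
  intro k k' h
  funext i
  simpa [torusChar_unitVec, ZMod.injective_stdAddChar.eq_iff] using congr($h (unitVec L i))

theorem lap_map_mulVec_apply (g : Torus L → ℂ) (x : Torus L) :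
    ((lap L).map (↑) *ᵥ g) x = ∑ i, (g (x + unitVec L i) + g (x - unitVec L i)) - 6 * g x := by
  simp only [mulVec, dotProduct, map_apply, lap, of_apply]
  push_cast [apply_ite ((↑) : ℝ → ℂ)]
  simp only [sub_mul, add_mul, sum_mul, ite_mul, one_mul, zero_mul, sum_sub_distrib,
    sum_add_distrib]
  rw [sum_comm, sum_comm (s := (univ : Finset (Torus L)))]
  simp

theorem lap_map_mulVec_torusChar (k : Torus L) :
    (lap L).map (↑) *ᵥ ⇑(torusChar k) = (-lapEigenvalue L k : ℂ) • ⇑(torusChar k) := by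
  ext x
  rw [lap_map_mulVec_apply, Pi.smul_apply, smul_eq_mul]
  simp only [AddChar.map_add_eq_mul, AddChar.map_sub_eq_div, torusChar_unitVec, div_eq_mul_inv,
    ← AddChar.map_neg_eq_inv, ← mul_add, ← mul_sum, stdAddChar_add_stdAddChar_neg,
    lapEigenvalue]
  push_cast
  rw [sum_sub_distrib]
  simp
  ring

def torusCharBasis (L : Fin 3 → ℕ) [∀ i, NeZero (L i)] : Module.Basis (Torus L) ℂ (Torus L → ℂ) :=
  basisOfLinearIndependentOfCardEqFinrank
    ((AddChar.linearIndependent (Torus L) ℂ).comp _ injective_torusChar)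
    (Module.finrank_fintype_fun_eq_card ℂ).symm

theorem det_smul_neg_lap_add_smul_one (c d : ℝ) :
    (c • -lap L + d • 1).det = ∏ k, (c * lapEigenvalue L k + d) := by
  apply Complex.ofReal_injective
  rw [Complex.ofReal_prod]
  change Complex.ofRealHom _ = _
  rw [Complex.ofRealHom.map_det, RingHom.mapMatrix_apply]
  refine Matrix.det_eq_prod_of_mulVec_basis_eq_smul _ (torusCharBasis L) _ fun k => ?_
  have : (c • -lap L + d • 1).map Complex.ofRealHom = (c : ℂ) • -(lap L).map (↑) + (d : ℂ) • 1 := by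
    ext x y
    by_cases h : x = y <;> simp [h]
  rw [this, torusCharBasis, coe_basisOfLinearIndependentOfCardEqFinrank, Function.comp_apply,
    add_mulVec, smul_mulVec, neg_mulVec, lap_map_mulVec_torusChar, smul_mulVec, one_mulVec]
  push_cast
  module

theorem sq_zdist_div_le_lapEigenvalue (k : Torus L) (j : Fin 3) :
    16 * ((zdist (k j) : ℝ) / L j) ^ 2 ≤ lapEigenvalue L k :=
  (sq_zdist_div_le_two_sub_two_cos (k j)).trans <|
    single_le_sum (f := fun i => 2 - 2 * Real.cos (2 * π * zdist (k i) / L i))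
      (fun i _ => (by positivity : (0 : ℝ) ≤ _).trans (sq_zdist_div_le_two_sub_two_cos (k i)))
      (mem_univ j)

theorem lapEigenvalue_nonneg (k : Torus L) : 0 ≤ lapEigenvalue L k :=
  (by positivity : (0 : ℝ) ≤ _).trans (sq_zdist_div_le_lapEigenvalue k 0)

theorem lapEigenvalue_pos {k : Torus L} (hk : k ≠ 0) : 0 < lapEigenvalue L k := by
  obtain ⟨j, hj⟩ := Function.ne_iff.1 hk
  have : 0 < zdist (k j) := Nat.pos_of_ne_zero (zdist_eq_zero_iff.not.2 hj)
  have : (0 : ℝ) < L j := by exact_mod_cast Nat.pos_of_neZero (L j)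
  exact lt_of_lt_of_le (by positivity) (sq_zdist_div_le_lapEigenvalue k j)

theorem zdist_pos_of_forall_le {k : Torus L} (hk : k ≠ 0) {j : Fin 3}
    (hj : ∀ i, (zdist (k i) : ℝ) / L i ≤ zdist (k j) / L j) : 0 < zdist (k j) := by
  obtain ⟨i, hi⟩ := Function.ne_iff.1 hk
  have hLi : (0 : ℝ) < L i := by exact_mod_cast Nat.pos_of_neZero (L i)
  have hLj : (0 : ℝ) < L j := by exact_mod_cast Nat.pos_of_neZero (L j)
  have hki : (0 : ℝ) < zdist (k i) := by
    exact_mod_cast Nat.pos_of_ne_zero (zdist_eq_zero_iff.not.2 hi)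
  exact_mod_cast (div_pos_iff_of_pos_right hLj).1 ((div_pos hki hLi).trans_le (hj i))

theorem det_smul_neg_lap_add_smul_one_pos {c d : ℝ} (hc : 0 ≤ c) (hd : 0 < d) :
    0 < (c • -lap L + d • 1).det := by
  rw [det_smul_neg_lap_add_smul_one]
  exact prod_pos fun k _ => by have := lapEigenvalue_nonneg k; positivity

theorem det_div_det_le {c m f : ℝ} (hc : 0 < c) (hm : 0 < m) (hf0 : 0 ≤ f) (hf1 : f < 1) :
    (c • -lap L + m • 1).det / (c • -lap L + ((1 - f) * m) • 1).det ≤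
      (1 - f)⁻¹ * exp (f * ∑ k ∈ univ.erase 0, log (1 + m / (c * lapEigenvalue L k))) := by
  have hy : ∀ k ∈ univ.erase (0 : Torus L), 0 < c * lapEigenvalue L k :=
    fun k hk => mul_pos hc (lapEigenvalue_pos (ne_of_mem_erase hk))
  have hQ : 0 < ∏ k ∈ univ.erase 0, (c * lapEigenvalue L k + (1 - f) * m) :=
    prod_pos fun k hk => by nlinarith [hy k hk]
  have h1f : 1 - f ≠ 0 := by linarith
  have hmodes := prod_add_le_exp_mul_prod _ hy hm.le hf0 hf1.le
  rw [det_smul_neg_lap_add_smul_one, det_smul_neg_lap_add_smul_one,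
    ← mul_prod_erase univ _ (mem_univ 0), ← mul_prod_erase univ _ (mem_univ 0),
    lapEigenvalue_zero, mul_zero, zero_add, zero_add,
    div_le_iff₀ (mul_pos (mul_pos (by linarith) hm) hQ)]
  calc m * ∏ k ∈ univ.erase 0, (c * lapEigenvalue L k + m)
      ≤ m * (exp (f * ∑ k ∈ univ.erase 0, log (1 + m / (c * lapEigenvalue L k))) *
          ∏ k ∈ univ.erase 0, (c * lapEigenvalue L k + (1 - f) * m)) := by gcongr
    _ = _ := by field_simp

theorem card_torus : Fintype.card (Torus L) = ∏ i, L i := by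
  simp [Fintype.card_pi, ZMod.card]

def dominantShell (L : Fin 3 → ℕ) [∀ i, NeZero (L i)] (j : Fin 3) (d : ℕ) : Finset (Torus L) :=
  {k | zdist (k j) = d ∧ ∀ i, (zdist (k i) : ℝ) / L i ≤ d / L j}

theorem card_dominantShell_le_prod (j : Fin 3) (d : ℕ) :
    (#(dominantShell L j d) : ℝ) ≤ 2 * ∏ i ∈ univ.erase j, (2 * ((d : ℝ) / L j * L i) + 1) := by
  classical
  let A : ∀ i, Finset (ZMod (L i)) := fun i =>
    if i = j then ({a | zdist a = d} : Finset (ZMod (L i)))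
    else ({a | (zdist a : ℝ) ≤ d / L j * L i} : Finset (ZMod (L i)))
  have hsub : dominantShell L j d ⊆ Fintype.piFinset A := by
    intro k hk
    simp only [dominantShell, mem_filter, mem_univ, true_and] at hk
    refine Fintype.mem_piFinset.2 fun i => ?_
    by_cases hij : i = j
    · subst hij; simp [A, hk.1]
    · simp only [A, if_neg hij, mem_filter, mem_univ, true_and]
      exact (div_le_iff₀ (by exact_mod_cast Nat.pos_of_neZero (L i))).1 (hk.2 i)
  have hcard : (#(Fintype.piFinset A) : ℝ) = #(A j) * ∏ i ∈ univ.erase j, (#(A i) : ℝ) := by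
    rw [Fintype.card_piFinset, Nat.cast_prod,
      mul_prod_erase univ (fun i => (#(A i) : ℝ)) (mem_univ j)]
  have hj : (#(A j) : ℝ) ≤ 2 := by
    simp only [A, if_pos rfl]
    exact_mod_cast card_filter_zdist_eq_le_two (L j) d
  have hi : ∀ i ∈ univ.erase j, (#(A i) : ℝ) ≤ 2 * ((d : ℝ) / L j * L i) + 1 := fun i hi => by
    simp only [A, if_neg (ne_of_mem_erase hi)]
    exact card_filter_zdist_le (L i) (by positivity)
  calc (#(dominantShell L j d) : ℝ) ≤ #(Fintype.piFinset A) := by exact_mod_cast card_le_card hsub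
    _ ≤ _ := by
      rw [hcard]
      exact mul_le_mul hj (prod_le_prod (fun _ _ => Nat.cast_nonneg _) hi)
        (prod_nonneg fun _ _ => Nat.cast_nonneg _) zero_le_two

theorem card_dominantShell_le {w : ℝ} (hw : 0 < w) (hwL : ∀ i, w ≤ L i) (j : Fin 3) (d : ℕ) :
    (#(dominantShell L j d) : ℝ) ≤
      8 * (1 + w * d / L j) ^ 2 / w ^ 2 * (Fintype.card (Torus L) / L j) := by
  have hL : ∀ i, (0 : ℝ) < L i := fun i => hw.trans_le (hwL i)
  have hfactor : ∀ i, 2 * ((d : ℝ) / L j * L i) + 1 ≤ 2 * (1 + w * d / L j) / w * L i := by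
    intro i
    have : 1 ≤ L i / w := (one_le_div hw).2 (hwL i)
    have : 2 * (1 + w * d / L j) / w * L i = 2 * (L i / w) + 2 * ((d : ℝ) / L j * L i) := by
      field_simp
    linarith
  have hprod : (L j : ℝ) * ∏ i ∈ univ.erase j, (L i : ℝ) = Fintype.card (Torus L) := by
    rw [mul_prod_erase univ (fun i => (L i : ℝ)) (mem_univ j), card_torus, Nat.cast_prod]
  calc (#(dominantShell L j d) : ℝ)
      ≤ 2 * ∏ i ∈ univ.erase j, (2 * (1 + w * d / L j) / w * L i) :=
        (card_dominantShell_le_prod j d).trans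
          (by gcongr with i; exact hfactor i)
    _ = 8 * (1 + w * d / L j) ^ 2 / w ^ 2 * (Fintype.card (Torus L) / L j) := by
        rw [prod_mul_distrib, prod_const, card_erase_of_mem (mem_univ j), card_univ,
          Fintype.card_fin, show 3 - 1 = 2 from rfl, ← hprod]
        have := (hL j).ne'
        have := hw.ne'
        field_simp
        ring

theorem log_one_add_div_le_of_mem_dominantShell {w m : ℝ} (hw : 0 < w) (hm0 : 0 ≤ m)
    (hm2 : m ≤ 2) {j : Fin 3} {d : ℕ} (hd : 0 < d) {k : Torus L} (hk : k ∈ dominantShell L j d) :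
    log (1 + m / (w ^ 2 * lapEigenvalue L k)) ≤ log (1 + 1 / (w * d / L j) ^ 2) := by
  have hkj : zdist (k j) = d := (mem_filter.1 hk).2.1
  have hlam := sq_zdist_div_le_lapEigenvalue k j
  rw [hkj] at hlam
  have hLj : (0 : ℝ) < L j := by exact_mod_cast Nat.pos_of_neZero (L j)
  have hq : (0 : ℝ) < d / L j := by positivity
  have hpos : 0 < w ^ 2 * lapEigenvalue L k := by
    have := pow_pos hq 2
    exact mul_pos (pow_pos hw 2) (by linarith)
  refine log_le_log (by positivity) (add_le_add_right ?_ 1)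
  calc m / (w ^ 2 * lapEigenvalue L k) ≤ 2 / (w ^ 2 * (16 * ((d : ℝ) / L j) ^ 2)) := by
        gcongr
    _ ≤ 1 / (w * d / L j) ^ 2 := by
        rw [mul_div_assoc, mul_pow, div_le_div_iff₀ (by positivity) (by positivity)]
        nlinarith [pow_pos hq 2, pow_pos hw 2]

theorem sum_dominantShell_log_le {w m : ℝ} (hw : 1 ≤ w) (hwL : ∀ i, w ≤ L i) (hm0 : 0 ≤ m)
    (hm2 : m ≤ 2) (j : Fin 3) {d : ℕ} (hd : 0 < d) :
    ∑ k ∈ dominantShell L j d, log (1 + m / (w ^ 2 * lapEigenvalue L k)) ≤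
      8 * (Fintype.card (Torus L) / L j) / w ^ 2 * (4 + 16 * √(L j) / √d) := by
  have hw0 : 0 < w := by linarith
  have hLj : (0 : ℝ) < L j := by exact_mod_cast Nat.pos_of_neZero (L j)
  set s := w * d / L j with hs
  have hs0 : 0 < s := by positivity
  have hsqrt : 16 / √s ≤ 16 * √(L j) / √d := by
    have : √d / √(L j) ≤ √s := by
      rw [← sqrt_div' _ hLj.le]
      exact sqrt_le_sqrt (by rw [hs, mul_div_assoc]; nlinarith [div_pos (Nat.cast_pos.2 hd) hLj])
    calc 16 / √s ≤ 16 / (√d / √(L j)) := by gcongr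
      _ = 16 * √(L j) / √d := by field_simp
  calc ∑ k ∈ dominantShell L j d, log (1 + m / (w ^ 2 * lapEigenvalue L k))
      ≤ #(dominantShell L j d) * log (1 + 1 / s ^ 2) := by
        rw [← nsmul_eq_mul]
        exact sum_le_card_nsmul _ _ _ fun k hk =>
          log_one_add_div_le_of_mem_dominantShell hw0 hm0 hm2 hd hk
    _ ≤ 8 * (1 + s) ^ 2 / w ^ 2 * (Fintype.card (Torus L) / L j) * log (1 + 1 / s ^ 2) := by
        gcongr
        · exact log_nonneg (le_add_of_nonneg_right (by positivity))
        · exact card_dominantShell_le hw0 hwL j d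
    _ = 8 * (Fintype.card (Torus L) / L j) / w ^ 2 * ((1 + s) ^ 2 * log (1 + 1 / s ^ 2)) := by
        ring
    _ ≤ 8 * (Fintype.card (Torus L) / L j) / w ^ 2 * (4 + 16 * √(L j) / √d) := by
        gcongr
        exact (one_add_sq_mul_log_one_add_inv_sq_le hs0).trans (by linarith)

theorem sum_Icc_sum_dominantShell_log_le {w m : ℝ} (hw : 1 ≤ w) (hwL : ∀ i, w ≤ L i)
    (hm0 : 0 ≤ m) (hm2 : m ≤ 2) (j : Fin 3) :
    ∑ d ∈ Icc 1 (L j), ∑ k ∈ dominantShell L j d, log (1 + m / (w ^ 2 * lapEigenvalue L k)) ≤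
      288 * Fintype.card (Torus L) / w ^ 2 := by
  have hLj : (0 : ℝ) < L j := by exact_mod_cast Nat.pos_of_neZero (L j)
  have hw0 : 0 < w := by linarith
  calc ∑ d ∈ Icc 1 (L j), ∑ k ∈ dominantShell L j d, log (1 + m / (w ^ 2 * lapEigenvalue L k))
      ≤ ∑ d ∈ Icc 1 (L j), 8 * (Fintype.card (Torus L) / L j) / w ^ 2 * (4 + 16 * √(L j) / √d) :=
        sum_le_sum fun d hd => sum_dominantShell_log_le hw hwL hm0 hm2 j (mem_Icc.1 hd).1
    _ = 8 * (Fintype.card (Torus L) / L j) / w ^ 2 *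
          (4 * L j + 16 * √(L j) * ∑ d ∈ Icc 1 (L j), (√d)⁻¹) := by
        rw [← mul_sum, sum_add_distrib, sum_const, Nat.card_Icc, mul_sum]
        simp only [nsmul_eq_mul, div_eq_mul_inv, Nat.add_sub_cancel]
        ring
    _ ≤ 8 * (Fintype.card (Torus L) / L j) / w ^ 2 * (4 * L j + 16 * √(L j) * (2 * √(L j))) := by
        gcongr
        exact sum_Icc_inv_sqrt_le (L j)
    _ = 288 * Fintype.card (Torus L) / w ^ 2 := by
        have : √(L j : ℝ) * √(L j) = L j := mul_self_sqrt hLj.le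
        rw [show 16 * √(L j : ℝ) * (2 * √(L j)) = 32 * L j by linear_combination 32 * this]
        field_simp
        ring

theorem sum_log_one_add_div_lapEigenvalue_le {w m : ℝ} (hw : 1 ≤ w) (hwL : ∀ i, w ≤ L i)
    (hm0 : 0 ≤ m) (hm2 : m ≤ 2) :
    ∑ k ∈ univ.erase 0, log (1 + m / (w ^ 2 * lapEigenvalue L k)) ≤
      864 * Fintype.card (Torus L) / w ^ 2 := by
  choose jmax hjmax using fun k : Torus L => Finite.exists_max fun i => (zdist (k i) : ℝ) / L i
  have hnonneg : ∀ k : Torus L, 0 ≤ log (1 + m / (w ^ 2 * lapEigenvalue L k)) := fun k =>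
    log_nonneg (le_add_of_nonneg_right (by have := lapEigenvalue_nonneg k; positivity))
  rw [← sum_fiberwise (univ.erase 0) jmax]
  calc ∑ j, ∑ k ∈ univ.erase 0 with jmax k = j, log (1 + m / (w ^ 2 * lapEigenvalue L k))
      ≤ ∑ j, ∑ d ∈ Icc 1 (L j), ∑ k ∈ dominantShell L j d,
          log (1 + m / (w ^ 2 * lapEigenvalue L k)) := by
        refine sum_le_sum fun j _ => ?_
        have hmaps : ∀ k ∈ ({k ∈ univ.erase 0 | jmax k = j} : Finset (Torus L)),
            zdist (k j) ∈ Icc 1 (L j) := by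
          intro k hk
          obtain ⟨⟨hk0, -⟩, rfl⟩ := by simpa only [mem_filter, mem_erase] using hk
          have := two_mul_zdist_le (k (jmax k))
          exact mem_Icc.2 ⟨zdist_pos_of_forall_le hk0 (hjmax k), by omega⟩
        rw [← sum_fiberwise_of_maps_to hmaps]
        refine sum_le_sum fun d _ => sum_le_sum_of_subset_of_nonneg ?_ fun k _ _ => hnonneg k
        intro k hk
        obtain ⟨⟨-, rfl⟩, rfl⟩ := by simpa only [mem_filter] using hk
        exact mem_filter.2 ⟨mem_univ _, rfl, hjmax k⟩
    _ ≤ ∑ _j : Fin 3, 288 * Fintype.card (Torus L) / w ^ 2 :=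
        sum_le_sum fun j _ => sum_Icc_sum_dominantShell_log_le hw hwL hm0 hm2 j
    _ = 864 * Fintype.card (Torus L) / w ^ 2 := by simp; ring

end Torus

theorem det_ratio_bound_general (η : ℝ) :
    ∃ K : ℝ, 0 < K ∧
      ∀ (W : ℕ), 0 < W →
      ∀ (L : Fin 3 → ℕ) [∀ i, NeZero (L i)], (∀ i, W ∣ L i) →
      ∀ E ∈ specI η,
      ∀ f : ℝ, 0 < f → f < 1 →
        ((Cmat L W E)⁻¹).det / (((Cmat L W E)⁻¹ - (f * mr2 E) • 1).det)
          ≤ K * (1 - f)⁻¹ *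
            Real.exp (K * f * (Fintype.card (Torus L) : ℝ) / (W : ℝ) ^ 2) := by
  refine ⟨864, by norm_num, fun W hW L _ hWL E hE f hf0 hf1 => ?_⟩
  have hw : (1 : ℝ) ≤ W := by exact_mod_cast hW
  have hwL : ∀ i, (W : ℝ) ≤ L i := fun i => by
    exact_mod_cast Nat.le_of_dvd (Nat.pos_of_neZero _) (hWL i)
  have hm := mr2_pos hE.2
  have hCinv : (Cmat L W E)⁻¹ = ((W : ℝ) ^ 2) • -lap L + mr2 E • 1 :=
    nonsing_inv_nonsing_inv _ (det_smul_neg_lap_add_smul_one_pos (by positivity) hm).ne'.isUnit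
  have hCf : (Cmat L W E)⁻¹ - (f * mr2 E) • 1 = ((W : ℝ) ^ 2) • -lap L + ((1 - f) * mr2 E) • 1 := by
    rw [hCinv]; module
  have hsum := sum_log_one_add_div_lapEigenvalue_le hw hwL hm.le (mr2_le_two E)
  rw [hCf, hCinv]
  calc _ ≤ (1 - f)⁻¹ * exp (f * ∑ k ∈ univ.erase 0,
          log (1 + mr2 E / ((W : ℝ) ^ 2 * lapEigenvalue L k))) :=
        det_div_det_le (by positivity) hm hf0.le hf1
    _ ≤ 1 * (1 - f)⁻¹ * exp (864 * f * Fintype.card (Torus L) / (W : ℝ) ^ 2) := by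
        rw [one_mul]
        gcongr
        calc f * _ ≤ f * (864 * Fintype.card (Torus L) / (W : ℝ) ^ 2) := by gcongr
          _ = _ := by ring
    _ ≤ 864 * (1 - f)⁻¹ * exp (864 * f * Fintype.card (Torus L) / (W : ℝ) ^ 2) := by
        have : 0 < 1 - f := by linarith
        gcongr
        norm_num

/-- Determinant ratio bound:
`det(C⁻¹)/det(C_f⁻¹) ≤ K (1-f)⁻¹ e^{K f |Λ|/W²}` where `C_f⁻¹ = C⁻¹ - f m_r²·Id`. -/
theorem det_ratio_bound (η : ℝ) (hη : 0 < η) :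
    ∃ K : ℝ, 0 < K ∧
      ∀ (W : ℕ), 0 < W →
      ∀ (L : Fin 3 → ℕ) [∀ i, NeZero (L i)], (∀ i, W ∣ L i) →
      ∀ E ∈ specI η,
      ∀ f : ℝ, 0 < f → f < 1 →
        ((Cmat L W E)⁻¹).det / (((Cmat L W E)⁻¹ - (f * mr2 E) • 1).det)
          ≤ K * (1 - f)⁻¹ *
            Real.exp (K * f * (Fintype.card (Torus L) : ℝ) / (W : ℝ) ^ 2) :=
  det_ratio_bound_general η
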